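/- arXiv:0812.3999 — 2 statements merged into one kernel-verified Lean document; each statement's English description precedes it below -/
import Mathlib

section
/- Let f : ℝ → ℝ be continuously differentiable, let u_l < u_r with c_l := f'(u_l) < c_r := f'(u_r) (as holds for a strictly convex flux), so that the rarefaction wave u(t,x) (equal to u_l for x ≤ c_l t, to (f')^{-1}(x/t) for c_l t ≤ x ≤ c_r t, and to u_r for x ≥ c_r t) solves the Riemann problem for ∂_t u + ∂_x f(u) = 0. Let ψ_l, ψ_r ∈ ℝ. Then for EVERY real parameter φ_*, the family of measures ψ(t) = ψ_l·Leb restricted to (−∞, c_l t) + ψ_r·Leb restricted to (c_r t, ∞) + φ_* δ_{c_r t} − φ_* δ_{c_l t} (which vanishes identically inside the rarefaction fan c_l t < x < c_r t apart from the two atoms on its edges, where the coefficient f'(u) is continuous with values c_l and c_r) is a weak solution of the linearized equation ∂_t ψ + ∂_x ( f'(u) ψ ) = 0: for every test function θ ∈ C_c^∞(ℝ × ℝ), ∫_0^∞ [ ψ_l ∫_{−∞}^{c_l t} ( ∂_t θ + c_l ∂_x θ ) dx + ψ_r ∫_{c_r t}^{∞} ( ∂_t θ + c_r ∂_x θ )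 dx + φ_* ( ∂_t θ(t, c_r t) + c_r ∂_x θ(t, c_r t) ) − φ_* ( ∂_t θ(t, c_l t) + c_l ∂_x θ(t, c_l t) ) ] dt + ψ_l ∫_{−∞}^0 θ(0,x) dx + ψ_r ∫_0^∞ θ(0,x) dx = 0. Moreover, distinct values of φ_* give measures ψ(t) that differ for every t > 0, so this Riemann problem admits infinitely many measure-valued weak solutions with the same initial data. -/
open MeasureTheory Set Filter Topology

section RarefactionAux

variable {θ : ℝ × ℝ → ℝ}

private lemma zero_of_nmem {g : ℝ × ℝ → ℝ} {R : ℝ}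
    (hR : tsupport g ⊆ Metric.closedBall 0 R) {p : ℝ × ℝ} (hp : R < ‖p‖) : g p = 0 := by
  apply image_eq_zero_of_notMem_tsupport
  intro hmem
  have := hR hmem
  rw [Metric.mem_closedBall, dist_zero_right] at this
  linarith

private lemma dd_eq (θ : ℝ × ℝ → ℝ) (c : ℝ) (p : ℝ × ℝ) :
    fderiv ℝ θ p (1, 0) + c * fderiv ℝ θ p (0, 1) = fderiv ℝ θ p (1, c) := by
  have h : ((1 : ℝ), c) = ((1 : ℝ), (0 : ℝ)) + c • ((0 : ℝ), (1 : ℝ)) := by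
    simp [Prod.ext_iff]
  rw [h, map_add, ContinuousLinearMap.map_smul, smul_eq_mul]

private lemma cont_dd (hθ : ContDiff ℝ (⊤ : ℕ∞) θ) (c : ℝ) :
    Continuous fun p : ℝ × ℝ => fderiv ℝ θ p (1, c) :=
  (hθ.continuous_fderiv (by simp)).clm_apply continuous_const

private lemma supp_dd (hs : HasCompactSupport θ) (c : ℝ) :
    HasCompactSupport fun p : ℝ × ℝ => fderiv ℝ θ p (1, c) :=
  hs.fderiv_apply ℝ (1, c)

private noncomputable def shear (c : ℝ) : (ℝ × ℝ) ≃ₜ (ℝ × ℝ) where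
  toFun p := (p.1, p.2 + c * p.1)
  invFun p := (p.1, p.2 - c * p.1)
  left_inv p := by simp
  right_inv p := by simp
  continuous_toFun := by fun_prop
  continuous_invFun := by fun_prop

private lemma integrable_prod_dd (hθ : ContDiff ℝ (⊤ : ℕ∞) θ) (hs : HasCompactSupport θ) (c : ℝ)
    (s u : Set ℝ) :
    Integrable (Function.uncurry fun t y : ℝ => fderiv ℝ θ (t, y + c * t) (1, c))
      ((volume.restrict s).prod (volume.restrict u)) := by
  have h1 : Continuous fun q : ℝ × ℝ => fderiv ℝ θ (q.1, q.2 + c * q.1) (1, c) :=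
    (cont_dd hθ c).comp (by fun_prop)
  have h2 : HasCompactSupport fun q : ℝ × ℝ => fderiv ℝ θ (q.1, q.2 + c * q.1) (1, c) :=
    (supp_dd hs c).comp_homeomorph (shear c)
  have h3 : Integrable (fun q : ℝ × ℝ => fderiv ℝ θ (q.1, q.2 + c * q.1) (1, c))
      ((volume : Measure ℝ).prod volume) := by
    rw [← Measure.volume_eq_prod]
    exact h1.integrable_of_hasCompactSupport h2
  rw [Measure.prod_restrict]
  exact h3.integrableOn

private lemma integrable_line_dd (hθ : ContDiff ℝ (⊤ : ℕ∞) θ) (hs : HasCompactSupport θ) (c y : ℝ) :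
    IntegrableOn (fun t : ℝ => fderiv ℝ θ (t, y + c * t) (1, c)) (Ioi 0) := by
  obtain ⟨R, hR⟩ := (supp_dd hs c).isBounded.subset_closedBall 0
  have hcs : HasCompactSupport fun t : ℝ => fderiv ℝ θ (t, y + c * t) (1, c) := by
    apply HasCompactSupport.intro (isCompact_Icc (a := -R) (b := R))
    intro t ht
    have h2 : R < |t| := by
      simp only [mem_Icc, not_and_or, not_le] at ht
      rcases ht with h | h
      · exact lt_of_lt_of_le (by linarith) (neg_le_abs t)
      · exact lt_of_lt_of_le h (le_abs_self t)
    apply zero_of_nmem hR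
    have := norm_fst_le ((t, y + c * t) : ℝ × ℝ)
    simp only [Real.norm_eq_abs] at this
    linarith
  exact (((cont_dd hθ c).comp (by fun_prop : Continuous fun t : ℝ => (t, y + c * t))
    ).integrable_of_hasCompactSupport hcs).integrableOn

private lemma line_integral (hθ : ContDiff ℝ (⊤ : ℕ∞) θ) (hs : HasCompactSupport θ) (c y : ℝ) :
    ∫ t in Ioi (0 : ℝ), fderiv ℝ θ (t, y + c * t) (1, c) = -θ (0, y) := by
  have hder : ∀ t : ℝ, HasDerivAt (fun t => θ (t, y + c * t))
      (fderiv ℝ θ (t, y + c * t) (1, c)) t := by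
    intro t
    have hγ : HasDerivAt (fun t : ℝ => ((t, y + c * t) : ℝ × ℝ)) ((1 : ℝ), c) t := by
      have h2 : HasDerivAt (fun t : ℝ => y + c * t) c t := by
        simpa using ((hasDerivAt_id t).const_mul c).const_add y
      exact (hasDerivAt_id t).prodMk h2
    exact ((hθ.differentiable (by simp) (t, y + c * t)).hasFDerivAt).comp_hasDerivAt t hγ
  have htend : Tendsto (fun t => θ (t, y + c * t)) atTop (𝓝 0) := by
    obtain ⟨R, hR⟩ := hs.isBounded.subset_closedBall 0
    apply tendsto_const_nhds.congr'
    filter_upwards [eventually_gt_atTop R] with t ht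
    symm
    apply zero_of_nmem hR
    have h1 := norm_fst_le ((t, y + c * t) : ℝ × ℝ)
    simp only [Real.norm_eq_abs] at h1
    have := le_abs_self t
    linarith
  have := integral_Ioi_of_hasDerivAt_of_tendsto (a := 0)
    ((hder 0).continuousAt.continuousWithinAt) (fun t _ => hder t)
    (integrable_line_dd hθ hs c y) htend
  simpa using this

private lemma shift_Iio (F : ℝ → ℝ) (a : ℝ) :
    ∫ x in Iio a, F x = ∫ y in Iio (0 : ℝ), F (y + a) := by
  rw [← integral_indicator measurableSet_Iio, ← integral_indicator measurableSet_Iio,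
    ← integral_add_right_eq_self (fun x => (Iio a).indicator F x) a]
  congr 1
  ext y
  simp only [indicator_apply, mem_Iio]
  by_cases h : y < 0
  · rw [if_pos (by linarith), if_pos h]
  · rw [if_neg (fun hcon => h (by linarith)), if_neg h]

private lemma shift_Ioi (F : ℝ → ℝ) (a : ℝ) :
    ∫ x in Ioi a, F x = ∫ y in Ioi (0 : ℝ), F (y + a) := by
  rw [← integral_indicator measurableSet_Ioi, ← integral_indicator measurableSet_Ioi,
    ← integral_add_right_eq_self (fun x => (Ioi a).indicator F x) a]
  congr 1
  ext y
  simp only [indicator_apply, mem_Ioi]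
  by_cases h : 0 < y
  · rw [if_pos (by linarith), if_pos h]
  · rw [if_neg (fun hcon => h (by linarith)), if_neg h]

end RarefactionAux

section RarefactionAux2

variable {θ : ℝ × ℝ → ℝ}

private lemma strip_Iio (hθ : ContDiff ℝ (⊤ : ℕ∞) θ) (hs : HasCompactSupport θ) (c : ℝ) :
    ∫ t in Ioi (0 : ℝ), ∫ x in Iio (c * t), fderiv ℝ θ (t, x) (1, c)
      = -∫ x in Iio (0 : ℝ), θ (0, x) := by
  have h1 : ∀ t : ℝ, (∫ x in Iio (c * t), fderiv ℝ θ (t, x) (1, c))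
      = ∫ y in Iio (0 : ℝ), fderiv ℝ θ (t, y + c * t) (1, c) :=
    fun t => shift_Iio (fun x => fderiv ℝ θ (t, x) (1, c)) (c * t)
  simp only [h1]
  rw [MeasureTheory.integral_integral_swap (integrable_prod_dd hθ hs c _ _)]
  simp only [line_integral hθ hs c]
  rw [integral_neg]

private lemma strip_Ioi (hθ : ContDiff ℝ (⊤ : ℕ∞) θ) (hs : HasCompactSupport θ) (c : ℝ) :
    ∫ t in Ioi (0 : ℝ), ∫ x in Ioi (c * t), fderiv ℝ θ (t, x) (1, c)
      = -∫ x in Ioi (0 : ℝ), θ (0, x) := by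
  have h1 : ∀ t : ℝ, (∫ x in Ioi (c * t), fderiv ℝ θ (t, x) (1, c))
      = ∫ y in Ioi (0 : ℝ), fderiv ℝ θ (t, y + c * t) (1, c) :=
    fun t => shift_Ioi (fun x => fderiv ℝ θ (t, x) (1, c)) (c * t)
  simp only [h1]
  rw [MeasureTheory.integral_integral_swap (integrable_prod_dd hθ hs c _ _)]
  simp only [line_integral hθ hs c]
  rw [integral_neg]

private lemma integrable_strip_Iio (hθ : ContDiff ℝ (⊤ : ℕ∞) θ) (hs : HasCompactSupport θ) (c : ℝ) :
    IntegrableOn (fun t : ℝ => ∫ x in Iio (c * t), fderiv ℝ θ (t, x) (1, c)) (Ioi 0) := by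
  have h := (integrable_prod_dd hθ hs c (Ioi 0) (Iio 0)).integral_prod_left
  exact h.congr (ae_of_all _ fun t =>
    (shift_Iio (fun x => fderiv ℝ θ (t, x) (1, c)) (c * t)).symm)

private lemma integrable_strip_Ioi (hθ : ContDiff ℝ (⊤ : ℕ∞) θ) (hs : HasCompactSupport θ) (c : ℝ) :
    IntegrableOn (fun t : ℝ => ∫ x in Ioi (c * t), fderiv ℝ θ (t, x) (1, c)) (Ioi 0) := by
  have h := (integrable_prod_dd hθ hs c (Ioi 0) (Ioi 0)).integral_prod_left
  exact h.congr (ae_of_all _ fun t =>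
    (shift_Ioi (fun x => fderiv ℝ θ (t, x) (1, c)) (c * t)).symm)

private lemma dirac_int (hθ : ContDiff ℝ (⊤ : ℕ∞) θ) (hs : HasCompactSupport θ) (c : ℝ) :
    IntegrableOn (fun t : ℝ => fderiv ℝ θ (t, c * t) (1, c)) (Ioi 0) := by
  have h := integrable_line_dd hθ hs c 0
  simpa using h

private lemma dirac_val (hθ : ContDiff ℝ (⊤ : ℕ∞) θ) (hs : HasCompactSupport θ) (c : ℝ) :
    ∫ t in Ioi (0 : ℝ), fderiv ℝ θ (t, c * t) (1, c) = -θ (0, 0) := by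
  have h := line_integral hθ hs c 0
  simpa using h

end RarefactionAux2

theorem rarefaction_part1 (cl cr : ℝ) (hc : cl < cr) (ψl ψr : ℝ) :
    (∀ φstar : ℝ, ∀ θ : ℝ × ℝ → ℝ, ContDiff ℝ (⊤ : ℕ∞) θ → HasCompactSupport θ →
      (∫ t in Ioi (0 : ℝ),
          (ψl * ∫ x in Iio (cl * t),
              (fderiv ℝ θ (t, x) (1, 0) + cl * fderiv ℝ θ (t, x) (0, 1)))
          + (ψr * ∫ x in Ioi (cr * t),
              (fderiv ℝ θ (t, x) (1, 0) + cr * fderiv ℝ θ (t, x) (0, 1)))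
          + φstar * (fderiv ℝ θ (t, cr * t) (1, 0) + cr * fderiv ℝ θ (t, cr * t) (0, 1))
          - φstar * (fderiv ℝ θ (t, cl * t) (1, 0) + cl * fderiv ℝ θ (t, cl * t) (0, 1)))
        + ψl * (∫ x in Iio (0 : ℝ), θ (0, x))
        + ψr * (∫ x in Ioi (0 : ℝ), θ (0, x)) = 0) := by
  intro φ θ hθ hs
  simp only [dd_eq θ cl, dd_eq θ cr]
  have iA : IntegrableOn
      (fun t => ψl * ∫ x in Iio (cl * t), fderiv ℝ θ (t, x) (1, cl)) (Ioi 0) :=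
    (integrable_strip_Iio hθ hs cl).const_mul ψl
  have iB : IntegrableOn
      (fun t => ψr * ∫ x in Ioi (cr * t), fderiv ℝ θ (t, x) (1, cr)) (Ioi 0) :=
    (integrable_strip_Ioi hθ hs cr).const_mul ψr
  have iC : IntegrableOn (fun t => φ * fderiv ℝ θ (t, cr * t) (1, cr)) (Ioi 0) :=
    (dirac_int hθ hs cr).const_mul φ
  have iD : IntegrableOn (fun t => φ * fderiv ℝ θ (t, cl * t) (1, cl)) (Ioi 0) :=
    (dirac_int hθ hs cl).const_mul φ
  have iAB : IntegrableOn
      (fun t => ψl * (∫ x in Iio (cl * t), fderiv ℝ θ (t, x) (1, cl))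
        + ψr * ∫ x in Ioi (cr * t), fderiv ℝ θ (t, x) (1, cr)) (Ioi 0) := iA.add iB
  have iABC : IntegrableOn
      (fun t => ψl * (∫ x in Iio (cl * t), fderiv ℝ θ (t, x) (1, cl))
        + ψr * (∫ x in Ioi (cr * t), fderiv ℝ θ (t, x) (1, cr))
        + φ * fderiv ℝ θ (t, cr * t) (1, cr)) (Ioi 0) := iAB.add iC
  rw [integral_sub iABC iD, integral_add iAB iC, integral_add iA iB,
    integral_const_mul, integral_const_mul, integral_const_mul, integral_const_mul,
    strip_Iio hθ hs cl, strip_Ioi hθ hs cr, dirac_val hθ hs cr, dirac_val hθ hs cl]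
  ring

/-- The pairing of the measure
`ψ(t) = ψ_l·Leb⌊(−∞,c_l t) + ψ_r·Leb⌊(c_r t,∞) + φ_*·δ_{c_r t} − φ_*·δ_{c_l t}`
with a test function `g`. -/
noncomputable def rarefactionPairing (ψl ψr φstar cl cr t : ℝ) (g : ℝ → ℝ) : ℝ :=
  ψl * (∫ x in Iio (cl * t), g x) + ψr * (∫ x in Ioi (cr * t), g x)
    + φstar * g (cr * t) - φstar * g (cl * t)

theorem rarefaction_part2 (cl cr : ℝ) (hc : cl < cr) (ψl ψr : ℝ)
    (φ φ' : ℝ) (hne : φ ≠ φ') (t : ℝ) (ht : 0 < t) :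
    ∃ g : ℝ → ℝ, Continuous g ∧ HasCompactSupport g ∧
      rarefactionPairing ψl ψr φ cl cr t g ≠
        rarefactionPairing ψl ψr φ' cl cr t g := by
  set d : ℝ := (cr - cl) * t with hd
  have hdpos : 0 < d := mul_pos (by linarith) ht
  refine ⟨fun x => max 0 (1 - |x - cr * t| / d), ?_, ?_, ?_⟩
  · fun_prop
  · apply HasCompactSupport.intro (isCompact_Icc (a := cr * t - d) (b := cr * t + d))
    intro x hx
    have habs : d < |x - cr * t| := by
      simp only [mem_Icc, not_and_or, not_le] at hx
      rcases hx with h | h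
      · rw [abs_of_neg (by linarith)]; linarith
      · rw [abs_of_pos (by linarith)]; linarith
    have h1 : (1 : ℝ) < |x - cr * t| / d := (one_lt_div hdpos).2 habs
    exact max_eq_left (by linarith)
  · have hg1 : max 0 (1 - |cr * t - cr * t| / d) = 1 := by simp
    have hg0 : max 0 (1 - |cl * t - cr * t| / d) = 0 := by
      have habs : |cl * t - cr * t| = d := by
        rw [abs_of_neg (by nlinarith)]; ring
      rw [habs, div_self (ne_of_gt hdpos)]; simp
    simp only [rarefactionPairing, hg1, hg0, mul_one, mul_zero, sub_zero]
    intro hcon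
    exact hne (by linarith)

/-- **Riemann problem, rarefaction case, for the linearized equation.**
For every real parameter `φ_*`, the measure
`ψ(t) = ψ_l·Leb⌊(−∞,c_l t) + ψ_r·Leb⌊(c_r t,∞) + φ_*·δ_{c_r t} − φ_*·δ_{c_l t}`
is a weak solution of `∂ₜψ + ∂ₓ(f'(u)ψ) = 0` along the rarefaction wave `u`;
moreover distinct values of `φ_*` give measures that differ for every `t > 0`,
so the Riemann problem admits infinitely many measure-valued weak solutions. -/
theorem stmt_3 (f : ℝ → ℝ) (hf : ContDiff ℝ 1 f)
    (ul ur : ℝ) (hlt : ul < ur)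
    (cl cr : ℝ) (hcl : cl = deriv f ul) (hcr : cr = deriv f ur) (hc : cl < cr)
    (ψl ψr : ℝ) :
    (∀ φstar : ℝ, ∀ θ : ℝ × ℝ → ℝ, ContDiff ℝ (⊤ : ℕ∞) θ → HasCompactSupport θ →
      (∫ t in Ioi (0 : ℝ),
          (ψl * ∫ x in Iio (cl * t),
              (fderiv ℝ θ (t, x) (1, 0) + cl * fderiv ℝ θ (t, x) (0, 1)))
          + (ψr * ∫ x in Ioi (cr * t),
              (fderiv ℝ θ (t, x) (1, 0) + cr * fderiv ℝ θ (t, x) (0, 1)))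
          + φstar * (fderiv ℝ θ (t, cr * t) (1, 0) + cr * fderiv ℝ θ (t, cr * t) (0, 1))
          - φstar * (fderiv ℝ θ (t, cl * t) (1, 0) + cl * fderiv ℝ θ (t, cl * t) (0, 1)))
        + ψl * (∫ x in Iio (0 : ℝ), θ (0, x))
        + ψr * (∫ x in Ioi (0 : ℝ), θ (0, x)) = 0) ∧
    (∀ φstar φstar' : ℝ, φstar ≠ φstar' → ∀ t : ℝ, 0 < t →
      ∃ g : ℝ → ℝ, Continuous g ∧ HasCompactSupport g ∧
        rarefactionPairing ψl ψr φstar cl cr t g ≠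
          rarefactionPairing ψl ψr φstar' cl cr t g) :=
  ⟨rarefaction_part1 cl cr hc ψl ψr,
   fun φ φ' hne t ht => rarefaction_part2 cl cr hc ψl ψr φ φ' hne t ht⟩
end

section
/- Let f : ℝ → ℝ be continuously differentiable, let u₋ ≠ u₊, and set λ̄ := ā(u₋, u₊). Assume the discontinuity (u₋, u₊) is entropy admissible in the sense of Oleinik: ā(u₋, w) ≥ λ̄ for every w strictly between u₋ and u₊. Then for EVERY constant v ∈ ℝ, the discontinuity of the averaged coefficient ā(·, v) (with left value ā₋ := ā(u₋, v), right value ā₊ := ā(u₊, v), propagating at speed λ̄) is NOT a rarefaction-shock except in the fully degenerate case; precisely, it is never the case that both ā₋ ≤ λ̄ ≤ ā₊ and ā₋ < ā₊ hold. -/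
/-!
Since `ā(a,b) (b - a) = f b - f a`, the averaged speed is the chord slope of `f`, and for any three
points `(ā(b,v) - λ) (v - b) = (ā(a,v) - λ) (v - a)` with `λ = ā(a,b)`. If `v` lies outside the
segment between `a = u₋` and `b = u₊`, the factors `v - a`, `v - b` have the same sign, so
`ā(a,v) - λ` and `ā(b,v) - λ` do too, which rules out `ā(a,v) ≤ λ ≤ ā(b,v)` with `ā(a,v) < ā(b,v)`.
Inside the segment the signs are opposite, so Oleinik's `ā(a,v) ≥ λ` forces `ā(b,v) ≤ λ`; by
continuity of `ā` in its second argument both inequalities persist at the endpoints.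
-/

open Set

/-- The averaged speed `ā(a,b) := ∫₀¹ f'(a + θ(b − a)) dθ`. -/
noncomputable def abar (f : ℝ → ℝ) (a b : ℝ) : ℝ :=
  ∫ θ in (0:ℝ)..1, deriv f (a + θ * (b - a))

/-- A jump from `aL` to `aR` of a speed coefficient, travelling at speed `s`. -/
def IsRarefactionShock (aL aR s : ℝ) : Prop :=
  aL ≤ s ∧ s ≤ aR ∧ aL < aR

def OleinikAdmissible (f : ℝ → ℝ) (a b : ℝ) : Prop :=
  ∀ w ∈ uIoo a b, abar f a b ≤ abar f a w

lemma sub_mul_sub_neg_iff_mem_uIoo {a b w : ℝ} : (w - a) * (w - b) < 0 ↔ w ∈ uIoo a b := by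
  simp only [uIoo_eq_union, mem_union, mem_Ioo, mul_neg_iff, sub_pos, sub_neg]
  tauto

section

variable {f : ℝ → ℝ}

lemma continuous_abar (hf : Continuous (deriv f)) (a : ℝ) :
    Continuous (abar f a) :=
  intervalIntegral.continuous_parametric_intervalIntegral_of_continuous' (by fun_prop) 0 1

lemma abar_mul_sub (hf : ContDiff ℝ 1 f) (a b : ℝ) : abar f a b * (b - a) = f b - f a := by
  have hderiv : ∀ θ ∈ uIcc (0:ℝ) 1,
      HasDerivAt (fun t => f (a + t * (b - a))) (deriv f (a + θ * (b - a)) * (b - a)) θ := by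
    intro θ _
    have hline : HasDerivAt (fun t : ℝ => a + t * (b - a)) (b - a) θ := by
      simpa using ((hasDerivAt_id θ).mul_const (b - a)).const_add a
    exact ((hf.differentiable one_ne_zero) _).hasDerivAt.comp θ hline
  have hcont : Continuous fun θ : ℝ => deriv f (a + θ * (b - a)) * (b - a) := by
    have := hf.continuous_deriv le_rfl
    fun_prop
  have := intervalIntegral.integral_eq_sub_of_hasDerivAt hderiv (hcont.intervalIntegrable 0 1)
  simpa [abar, intervalIntegral.integral_mul_const] using this

lemma abar_sub_mul_eq (hf : ContDiff ℝ 1 f) (a b v : ℝ) :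
    (abar f b v - abar f a b) * (v - b) = (abar f a v - abar f a b) * (v - a) := by
  linear_combination abar_mul_sub hf b v - abar_mul_sub hf a v + abar_mul_sub hf a b

lemma not_isRarefactionShock_abar_of_notMem_uIcc (hf : ContDiff ℝ 1 f) {a b v : ℝ}
    (hv : v ∉ uIcc a b) :
    ¬ IsRarefactionShock (abar f a v) (abar f b v) (abar f a b) := by
  rintro ⟨hL, hR, hLR⟩
  have hpos : 0 < (v - a) * (v - b) := by
    rw [← not_le, le_iff_lt_or_eq, sub_mul_sub_neg_iff_mem_uIoo, mul_eq_zero, sub_eq_zero,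
      sub_eq_zero]
    rintro (h | rfl | rfl)
    · exact hv (uIoo_subset_uIcc_self h)
    · exact hv left_mem_uIcc
    · exact hv right_mem_uIcc
  have key : (abar f b v - abar f a v) * ((v - a) * (v - b)) =
      (abar f a v - abar f a b) * (v - a) ^ 2 - (abar f b v - abar f a b) * (v - b) ^ 2 := by
    linear_combination (2 * v - a - b) * abar_sub_mul_eq hf a b v
  nlinarith [mul_pos (sub_pos.2 hLR) hpos, mul_nonneg (sub_nonneg.2 hR) (sq_nonneg (v - b)),
    mul_nonneg (sub_nonneg.2 hL) (sq_nonneg (v - a))]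

lemma OleinikAdmissible.abar_le (hf : ContDiff ℝ 1 f) {a b w : ℝ}
    (h : OleinikAdmissible f a b) (hw : w ∈ uIoo a b) : abar f b w ≤ abar f a b := by
  have hneg := sub_mul_sub_neg_iff_mem_uIoo.2 hw
  have key : (abar f b w - abar f a b) * (w - b) ^ 2 =
      (abar f a w - abar f a b) * ((w - a) * (w - b)) := by
    linear_combination (w - b) * abar_sub_mul_eq hf a b w
  nlinarith [mul_nonpos_of_nonneg_of_nonpos (sub_nonneg.2 (h w hw)) hneg.le,
    sq_pos_of_ne_zero (sub_ne_zero.2 (ne_of_mem_of_not_mem hw right_notMem_uIoo))]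

lemma OleinikAdmissible.not_isRarefactionShock (hf : ContDiff ℝ 1 f) {a b v : ℝ}
    (h : OleinikAdmissible f a b) (hab : a ≠ b) (hv : v ∈ uIcc a b) :
    ¬ IsRarefactionShock (abar f a v) (abar f b v) (abar f a b) := by
  have hc := continuous_abar (hf.continuous_deriv le_rfl)
  rw [← closure_uIoo hab] at hv
  have hsub : uIoo a b ⊆ {w | abar f b w ≤ abar f a b} ∩ {w | abar f a b ≤ abar f a w} :=
    fun w hw ↦ ⟨h.abar_le hf hw, h w hw⟩
  obtain ⟨hR, hL⟩ := closure_minimal hsub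
    ((isClosed_le (hc b) continuous_const).inter (isClosed_le continuous_const (hc a))) hv
  rintro ⟨-, -, hLR⟩
  exact absurd (hR.trans hL) hLR.not_ge

end

/-- **Fundamental property for scalar equations.** If the discontinuity `(u₋, u₊)`
is entropy admissible in the sense of Oleinik (`ā(u₋,w) ≥ λ̄` for all `w` strictly
between `u₋` and `u₊`), then for every constant `v` the discontinuity of the averaged
coefficient `ā(·,v)` is not a (non-degenerate) rarefaction-shock: it is never the
case that both `ā₋ ≤ λ̄ ≤ ā₊` and `ā₋ < ā₊` hold. -/
theorem stmt_12 (f : ℝ → ℝ) (hf : ContDiff ℝ 1 f)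
    (um up : ℝ) (hne : um ≠ up)
    (lam : ℝ) (hlam : lam = abar f um up)
    (hOleinik : ∀ w : ℝ, (w - um) * (w - up) < 0 → abar f um w ≥ lam) :
    ∀ v : ℝ, ¬ (abar f um v ≤ lam ∧ lam ≤ abar f up v ∧ abar f um v < abar f up v) := by
  intro v
  subst hlam
  have hadm : OleinikAdmissible f um up :=
    fun w hw ↦ hOleinik w (sub_mul_sub_neg_iff_mem_uIoo.2 hw)
  by_cases hv : v ∈ uIcc um up
  · exact hadm.not_isRarefactionShock hf hne hv
  · exact not_isRarefactionShock_abar_of_notMem_uIcc hf hv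
end
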